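/- arXiv:2003.10941 — 2 statements merged into one kernel-verified Lean document; each statement's English description precedes it below -/
import Mathlib

section
/- For the flat Markov chain in ℝ^N with steps of radii d₁,…,d_M starting at 0, the variance of ‖x_M‖² equals (4/N)·∑_{i<j} d_i² d_j², i.e., E[‖x_M‖⁴] − (∑_i d_i²)² = (4/N)∑_{i<j} d_i²d_j². -/
/-!
A rotation-invariant probability measure `ν` on the unit sphere has moments
`∫ ⟪x, y⟫ dν = 0` and `∫ ⟪x, y⟫² dν = ‖x‖² / N`: reflections carry any vector to any other of the
same norm, and summing over an orthonormal basis gives `∫ ‖y‖² dν = 1`. On the sphere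
`‖x + r y‖² = ‖x‖² + r² + 2 r ⟪x, y⟫`, so one averaging step maps quadratic polynomials in `‖x‖²`
to quadratic polynomials in `‖x‖²`, and along the chain `‖x‖⁴` becomes
`(‖x‖² + S)² + (4/N) (S ‖x‖² + T)` with `S = ∑ dᵢ²` and `T = ∑_{i<j} dᵢ² dⱼ²`.
-/

open MeasureTheory Real
open scoped RealInnerProductSpace

/-- `(Ld ν d f) x₀` is the average of `f` over the sphere of radius `d` centered at `x₀`,
where `ν` is the uniform (rotation-invariant) probability measure on the unit sphere. -/
noncomputable def Ld {N : ℕ} (ν : MeasureTheory.Measure (EuclideanSpace ℝ (Fin N)))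
    (d : ℝ) (f : EuclideanSpace ℝ (Fin N) → ℝ) (x₀ : EuclideanSpace ℝ (Fin N)) : ℝ :=
  ∫ y, f (x₀ + d • y) ∂ν

/-- Iterated averaging: `(iterLd ν [d₁, …, d_M] f) x₀` is the expectation of `f (x_M)` for
the flat Markov chain with step radii `d₁, …, d_M` starting at `x₀`. -/
noncomputable def iterLd {N : ℕ} (ν : MeasureTheory.Measure (EuclideanSpace ℝ (Fin N))) :
    List ℝ → (EuclideanSpace ℝ (Fin N) → ℝ) → EuclideanSpace ℝ (Fin N) → ℝ
  | [], f => f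
  | d :: rest, f => Ld ν d (iterLd ν rest f)

section SphereMoments

variable {E : Type*} [NormedAddCommGroup E] [InnerProductSpace ℝ E] [MeasurableSpace E]
  [BorelSpace E] {ν : Measure E}

theorem integral_comp_linearIsometryEquiv_of_map_eq (hinv : ∀ O : E ≃ₗᵢ[ℝ] E, ν.map O = ν)
    (O : E ≃ₗᵢ[ℝ] E) (f : E → ℝ) : ∫ y, f (O y) ∂ν = ∫ y, f y ∂ν :=
  MeasurePreserving.integral_comp' (f := O.toHomeomorph.toMeasurableEquiv)
    ⟨O.continuous.measurable, hinv O⟩ f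

theorem integral_inner_eq_zero_of_map_eq (hinv : ∀ O : E ≃ₗᵢ[ℝ] E, ν.map O = ν) (x : E) :
    ∫ y, ⟪x, y⟫ ∂ν = 0 := by
  have h := integral_comp_linearIsometryEquiv_of_map_eq hinv (LinearIsometryEquiv.neg ℝ)
    fun y => ⟪x, y⟫
  simp only [LinearIsometryEquiv.coe_neg, inner_neg_right, integral_neg] at h
  linarith

theorem integral_inner_sq_eq_of_norm_eq (hinv : ∀ O : E ≃ₗᵢ[ℝ] E, ν.map O = ν) {u v : E}
    (huv : ‖u‖ = ‖v‖) : ∫ y, ⟪u, y⟫ ^ 2 ∂ν = ∫ y, ⟪v, y⟫ ^ 2 ∂ν := by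
  set O := Submodule.reflection (ℝ ∙ (u - v))ᗮ
  have hO : ∀ y, ⟪v, O y⟫ = ⟪u, y⟫ := fun y => by
    rw [← Submodule.reflection_sub huv, LinearIsometryEquiv.inner_map_map]
  simpa only [hO] using integral_comp_linearIsometryEquiv_of_map_eq hinv O fun y => ⟪v, y⟫ ^ 2

theorem integrable_inner_pow [IsFiniteMeasure ν] (hsupp : ∀ᵐ y ∂ν, ‖y‖ = 1) (x : E) (k : ℕ) :
    Integrable (fun y => ⟪x, y⟫ ^ k) ν := by
  refine Integrable.of_bound (by fun_prop) (‖x‖ ^ k) (hsupp.mono fun y hy => ?_)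
  rw [norm_pow, Real.norm_eq_abs]
  gcongr
  simpa [hy] using abs_real_inner_le_norm x y

theorem integral_inner_sq [FiniteDimensional ℝ E] [IsProbabilityMeasure ν]
    (hsupp : ∀ᵐ y ∂ν, ‖y‖ = 1) (hinv : ∀ O : E ≃ₗᵢ[ℝ] E, ν.map O = ν) (x : E) :
    ∫ y, ⟪x, y⟫ ^ 2 ∂ν = ‖x‖ ^ 2 / Module.finrank ℝ E := by
  obtain ⟨y₀, hy₀⟩ := hsupp.exists
  have : Nontrivial E := nontrivial_of_ne y₀ 0 (by simp [← norm_ne_zero_iff, hy₀])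
  have hdim : (Module.finrank ℝ E : ℝ) ≠ 0 := Nat.cast_ne_zero.mpr Module.finrank_pos.ne'
  set b := stdOrthonormalBasis ℝ E
  have hbasis : ∑ i, ∫ y, ⟪b i, y⟫ ^ 2 ∂ν = 1 := by
    rw [← integral_finsetSum _ fun i _ => integrable_inner_pow hsupp (b i) 2,
      integral_congr_ae (g := fun _ => 1)
        (hsupp.mono fun y hy => by simp [b.sum_sq_inner_right, hy]),
      integral_const, probReal_univ, one_smul]
  have hterm : ∀ i, ∫ y, ⟪x, y⟫ ^ 2 ∂ν = ‖x‖ ^ 2 * ∫ y, ⟪b i, y⟫ ^ 2 ∂ν := fun i => by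
    rw [integral_inner_sq_eq_of_norm_eq hinv (v := ‖x‖ • b i) (by simp [norm_smul]),
      ← integral_const_mul]
    simp only [real_inner_smul_left, mul_pow]
  rw [eq_div_iff hdim, mul_comm]
  calc (Module.finrank ℝ E : ℝ) * ∫ y, ⟪x, y⟫ ^ 2 ∂ν = ∑ i, ‖x‖ ^ 2 * ∫ y, ⟪b i, y⟫ ^ 2 ∂ν := by
        simp [← hterm]
    _ = ‖x‖ ^ 2 := by rw [← Finset.mul_sum, hbasis, mul_one]

theorem integral_add_inner_add_inner_sq [FiniteDimensional ℝ E] [IsProbabilityMeasure ν]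
    (hsupp : ∀ᵐ y ∂ν, ‖y‖ = 1) (hinv : ∀ O : E ≃ₗᵢ[ℝ] E, ν.map O = ν) (x : E) (a b c : ℝ) :
    ∫ y, a + b * ⟪x, y⟫ + c * ⟪x, y⟫ ^ 2 ∂ν = a + c * (‖x‖ ^ 2 / Module.finrank ℝ E) := by
  have h₁ : Integrable (fun y => b * ⟪x, y⟫) ν := by
    simpa using (integrable_inner_pow hsupp x 1).const_mul b
  have h₀₁ : Integrable (fun y => a + b * ⟪x, y⟫) ν := (integrable_const a).add h₁
  rw [integral_add h₀₁ ((integrable_inner_pow hsupp x 2).const_mul c),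
    integral_add (integrable_const a) h₁, integral_const_mul, integral_const_mul,
    integral_inner_eq_zero_of_map_eq hinv, integral_inner_sq hsupp hinv, integral_const,
    probReal_univ, one_smul, mul_zero, add_zero]

end SphereMoments

theorem Fin.sum_sum_ite_lt_succ {R : Type*} [CommSemiring R] {M : ℕ} (a : Fin (M + 1) → R) :
    ∑ i, ∑ j, (if i < j then a i * a j else 0) =
      a 0 * ∑ j : Fin M, a j.succ +
        ∑ i : Fin M, ∑ j : Fin M, if i < j then a i.succ * a j.succ else 0 := by
  simp [Fin.sum_univ_succ, Finset.mul_sum]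

section FlatChain

variable {N : ℕ} {ν : Measure (EuclideanSpace ℝ (Fin N))} [IsProbabilityMeasure ν]

theorem Ld_quartic_norm (hsupp : ∀ᵐ y ∂ν, ‖y‖ = 1)
    (hinv : ∀ O : EuclideanSpace ℝ (Fin N) ≃ₗᵢ[ℝ] EuclideanSpace ℝ (Fin N), ν.map O = ν)
    (r α β γ : ℝ) (x : EuclideanSpace ℝ (Fin N)) :
    Ld ν r (fun x => α * ‖x‖ ^ 4 + β * ‖x‖ ^ 2 + γ) x =
      α * ((‖x‖ ^ 2 + r ^ 2) ^ 2 + 4 * r ^ 2 * (‖x‖ ^ 2 / N)) + β * (‖x‖ ^ 2 + r ^ 2) + γ := by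
  set A := ‖x‖ ^ 2 + r ^ 2
  have hexpand : ∀ᵐ y ∂ν, α * ‖x + r • y‖ ^ 4 + β * ‖x + r • y‖ ^ 2 + γ =
      (α * A ^ 2 + β * A + γ) + 2 * r * (2 * α * A + β) * ⟪x, y⟫ + 4 * α * r ^ 2 * ⟪x, y⟫ ^ 2 :=
    hsupp.mono fun y hy => by
      have hsq : ‖x + r • y‖ ^ 2 = A + 2 * r * ⟪x, y⟫ := by
        rw [norm_add_sq_real, norm_smul, mul_pow, Real.norm_eq_abs, sq_abs, hy,
          real_inner_smul_right]
        ring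
      rw [show ‖x + r • y‖ ^ 4 = (‖x + r • y‖ ^ 2) ^ 2 by ring, hsq]
      ring
  rw [Ld, integral_congr_ae hexpand, integral_add_inner_add_inner_sq hsupp hinv,
    finrank_euclideanSpace_fin]
  ring

theorem iterLd_ofFn_norm_pow_four (hsupp : ∀ᵐ y ∂ν, ‖y‖ = 1)
    (hinv : ∀ O : EuclideanSpace ℝ (Fin N) ≃ₗᵢ[ℝ] EuclideanSpace ℝ (Fin N), ν.map O = ν)
    {M : ℕ} (d : Fin M → ℝ) (x : EuclideanSpace ℝ (Fin N)) :
    iterLd ν (List.ofFn d) (fun x => ‖x‖ ^ 4) x =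
      (‖x‖ ^ 2 + ∑ i, d i ^ 2) ^ 2 +
        4 / N * (‖x‖ ^ 2 * ∑ i, d i ^ 2 + ∑ i, ∑ j, if i < j then d i ^ 2 * d j ^ 2 else 0) := by
  induction M generalizing x with
  | zero => simp only [List.ofFn_zero, iterLd, Finset.univ_eq_empty, Finset.sum_empty]; ring
  | succ M ih =>
    set S := ∑ i : Fin M, d i.succ ^ 2
    set T := ∑ i : Fin M, ∑ j : Fin M, if i < j then d i.succ ^ 2 * d j.succ ^ 2 else 0
    have hrest : iterLd ν (List.ofFn fun i => d i.succ) (fun x => ‖x‖ ^ 4) =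
        fun x => 1 * ‖x‖ ^ 4 + (2 + 4 / N) * S * ‖x‖ ^ 2 + (S ^ 2 + 4 / N * T) :=
      funext fun x => by rw [ih]; ring
    rw [List.ofFn_succ, iterLd, hrest, Ld_quartic_norm hsupp hinv,
      Fin.sum_univ_succ (f := fun i => d i ^ 2), Fin.sum_sum_ite_lt_succ fun i => d i ^ 2]
    ring

end FlatChain

theorem flat_chain_variance_general (N M : ℕ)
    (ν : Measure (EuclideanSpace ℝ (Fin N))) [IsProbabilityMeasure ν]
    (hsupp : ∀ᵐ y ∂ν, ‖y‖ = 1)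
    (hinv : ∀ O : EuclideanSpace ℝ (Fin N) ≃ₗᵢ[ℝ] EuclideanSpace ℝ (Fin N),
      ν.map O = ν)
    (d : Fin M → ℝ) :
    iterLd ν (List.ofFn d) (fun x => ‖x‖ ^ 4) 0 - (∑ i, d i ^ 2) ^ 2
      = (4 / (N : ℝ)) * ∑ i, ∑ j, if i < j then d i ^ 2 * d j ^ 2 else 0 := by
  rw [iterLd_ofFn_norm_pow_four hsupp hinv d 0, norm_zero]
  ring

/-- For the flat Markov chain in `ℝ^N` with radii `d₁, …, d_M` starting at `0`, the
variance of `‖x_M‖²` equals `(4/N)·∑_{i<j} d_i² d_j²`: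
`E[‖x_M‖⁴] − (∑ d_i²)² = (4/N)·∑_{i<j} d_i² d_j²`. -/
theorem flat_chain_variance (N M : ℕ) (hN : 1 ≤ N)
    (ν : Measure (EuclideanSpace ℝ (Fin N))) [IsProbabilityMeasure ν]
    (hsupp : ∀ᵐ y ∂ν, ‖y‖ = 1)
    (hinv : ∀ O : EuclideanSpace ℝ (Fin N) ≃ₗᵢ[ℝ] EuclideanSpace ℝ (Fin N),
      ν.map O = ν)
    (d : Fin M → ℝ) (hd : ∀ i, 0 ≤ d i) :
    iterLd ν (List.ofFn d) (fun x => ‖x‖ ^ 4) 0 - (∑ i, d i ^ 2) ^ 2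
      = (4 / (N : ℝ)) * ∑ i, ∑ j, if i < j then d i ^ 2 * d j ^ 2 else 0 :=
  flat_chain_variance_general N M ν hsupp hinv d
end

section
/- Consider the Markov chain on the hyperboloid H^{N-1} starting at u₀, where u_k is uniformly distributed on Σ(u_{k−1}, ξ_k) = cosh ξ_k·u_{k−1} + sinh ξ_k·S^{N-2}_{u_{k−1}⊥}, for given hyperbolic arcs ξ₁,…,ξ_M ≥ 0. Then E[⟨u_M, u₀⟩_H] = ∏_{i=1}^M cosh ξ_i. -/
open MeasureTheory Real
open scoped RealInnerProductSpace

/-- The Minkowski bilinear form `⟨x,y⟩_H = x₁y₁ − ∑_{j≥2} x_j y_j` on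
`ℝ^{1,n} = ℝ × ℝ^n` (total dimension `N = n + 1`). -/
noncomputable def mink {n : ℕ} (x y : ℝ × EuclideanSpace ℝ (Fin n)) : ℝ :=
  x.1 * y.1 - ⟪x.2, y.2⟫

/-- The hyperbolic averaging operator: `(LH ν ξ f) u` is the average of `f` over
`Σ(u,ξ) = cosh ξ · u + sinh ξ · S^{N-2}_{u⊥}`, where `ν u` is the uniform probability
measure on the unit sphere of the Minkowski-orthogonal complement of `u`. -/
noncomputable def LH {n : ℕ}
    (ν : (ℝ × EuclideanSpace ℝ (Fin n)) → MeasureTheory.Measure (ℝ × EuclideanSpace ℝ (Fin n)))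
    (ξ : ℝ) (f : (ℝ × EuclideanSpace ℝ (Fin n)) → ℝ)
    (u : ℝ × EuclideanSpace ℝ (Fin n)) : ℝ :=
  ∫ y, f (Real.cosh ξ • u + Real.sinh ξ • y) ∂(ν u)

/-- Iterated hyperbolic averaging: `(iterLH ν [ξ₁, …, ξ_M] f) u₀` is the expectation of
`f (u_M)` for the Markov chain on the hyperboloid starting at `u₀` whose `k`-th step
moves uniformly on `Σ(u_{k-1}, ξ_k)`. -/
noncomputable def iterLH {n : ℕ}
    (ν : (ℝ × EuclideanSpace ℝ (Fin n)) → MeasureTheory.Measure (ℝ × EuclideanSpace ℝ (Fin n))) :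
    List ℝ → ((ℝ × EuclideanSpace ℝ (Fin n)) → ℝ) → (ℝ × EuclideanSpace ℝ (Fin n)) → ℝ
  | [], f => f
  | ξ :: rest, f => LH ν ξ (iterLH ν rest f)

/-! The Minkowski reflection `x ↦ 2⟨x,u⟩_H u − x` is an isometry fixing `u` and negating `u^⊥`,
so the uniform measure on the unit sphere of `u^⊥` has barycenter `0` and the expected position
after one step from `u` is `cosh ξ • u`. Since `⟨·, v⟩_H` is linear and every step stays on the
upper sheet, averaging one step multiplies `⟨u, v⟩_H` by `cosh ξ`, and induction on the list of
arcs gives `E⟨u_M, v⟩_H = (∏ cosh ξ_i) ⟨u₀, v⟩_H`; take `v = u₀`. -/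

variable {n : ℕ}

local notation "V" => ℝ × EuclideanSpace ℝ (Fin n)

lemma mink_comm (x y : V) : mink x y = mink y x := by
  simp [mink, real_inner_comm, mul_comm]

@[simp] lemma mink_add_left (x y v : V) : mink (x + y) v = mink x v + mink y v := by
  simp [mink, inner_add_left]; ring

@[simp] lemma mink_sub_left (x y v : V) : mink (x - y) v = mink x v - mink y v := by
  simp [mink, inner_sub_left]; ring

@[simp] lemma mink_smul_left (a : ℝ) (x v : V) : mink (a • x) v = a * mink x v := by
  simp [mink, inner_smul_left]; ring

@[simp] lemma mink_add_right (v x y : V) : mink v (x + y) = mink v x + mink v y := by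
  simp [mink, inner_add_right]; ring

@[simp] lemma mink_sub_right (v x y : V) : mink v (x - y) = mink v x - mink v y := by
  simp [mink, inner_sub_right]; ring

@[simp] lemma mink_smul_right (a : ℝ) (v x : V) : mink v (a • x) = a * mink v x := by
  simp [mink, inner_smul_right]; ring

noncomputable def minkCLM (v : V) : V →L[ℝ] ℝ :=
  v.1 • ContinuousLinearMap.fst ℝ ℝ _ - (innerSL ℝ v.2).comp (ContinuousLinearMap.snd ℝ ℝ _)

@[simp] lemma minkCLM_apply (v x : V) : minkCLM v x = mink x v := by
  simp [minkCLM, mink, real_inner_comm, mul_comm]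

noncomputable def minkReflection (u : V) : V →L[ℝ] V :=
  (2 • minkCLM u).smulRight u - ContinuousLinearMap.id ℝ V

lemma minkReflection_apply (u x : V) : minkReflection u x = (2 * mink x u) • u - x := by
  simp [minkReflection]

lemma minkReflection_self {u : V} (hu : mink u u = 1) : minkReflection u u = u := by
  rw [minkReflection_apply, hu, mul_one, two_smul, add_sub_cancel_right]

lemma minkReflection_of_mink_eq_zero {u y : V} (hy : mink y u = 0) :
    minkReflection u y = -y := by
  rw [minkReflection_apply, hy, mul_zero, zero_smul, zero_sub]

lemma mink_minkReflection {u : V} (hu : mink u u = 1) (x y : V) :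
    mink (minkReflection u x) (minkReflection u y) = mink x y := by
  simp only [minkReflection_apply, mink_sub_left, mink_sub_right, mink_smul_left,
    mink_smul_right, hu, mink_comm u y]
  ring

def hyperboloid (n : ℕ) : Set (ℝ × EuclideanSpace ℝ (Fin n)) :=
  {u | mink u u = 1 ∧ 0 < u.1}

lemma fst_pos_of_mink_pos {u w : V} (hu : 0 ≤ mink u u) (hu1 : 0 < u.1) (hw : 0 ≤ mink w w)
    (huw : 0 < mink u w) : 0 < w.1 := by
  rw [mink, real_inner_self_eq_norm_sq] at hu hw
  by_contra! hw1
  have hu2 : ‖u.2‖ ≤ u.1 := le_of_sq_le_sq (by nlinarith) hu1.le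
  have hw2 : ‖w.2‖ ≤ -w.1 := le_of_sq_le_sq (by nlinarith) (by linarith)
  have hcs : -(‖u.2‖ * ‖w.2‖) ≤ ⟪u.2, w.2⟫ := neg_le_of_abs_le (abs_real_inner_le_norm _ _)
  unfold mink at huw
  -- `⟨u, w⟩_H ≤ u.1 w.1 + ‖u.2‖ ‖w.2‖ ≤ u.1 w.1 + u.1 (-w.1) = 0`
  nlinarith [mul_le_mul hu2 hw2 (norm_nonneg _) hu1.le]

lemma norm_le_abs_fst_of_mink_eq {u y : V} (hu : mink u u = 1) (huy : mink u y = 0)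
    (hy : mink y y = -1) : ‖y‖ ≤ |u.1| := by
  rw [mink, real_inner_self_eq_norm_sq] at hu hy
  rw [mink] at huy
  have hcs : (u.1 * y.1) ^ 2 ≤ (u.1 ^ 2 - 1) * (y.1 ^ 2 + 1) := by
    rw [show u.1 * y.1 = ⟪u.2, y.2⟫ by linarith, show u.1 ^ 2 - 1 = ‖u.2‖ ^ 2 by linarith,
      show y.1 ^ 2 + 1 = ‖y.2‖ ^ 2 by linarith, ← mul_pow]
    exact sq_le_sq' (neg_le_of_abs_le (abs_real_inner_le_norm _ _)) (real_inner_le_norm _ _)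
  have hy1 : y.1 ^ 2 ≤ u.1 ^ 2 - 1 := by nlinarith
  refine norm_prod_le_iff.2 ⟨sq_le_sq.1 (by nlinarith), ?_⟩
  exact (abs_norm _).symm.trans_le (sq_le_sq.1 (by nlinarith))

lemma step_mem_hyperboloid {u y : V} (hu : u ∈ hyperboloid n) (huy : mink u y = 0)
    (hy : mink y y = -1) (ξ : ℝ) : cosh ξ • u + sinh ξ • y ∈ hyperboloid n := by
  have hself : mink (cosh ξ • u + sinh ξ • y) (cosh ξ • u + sinh ξ • y) = 1 := by
    simp only [mink_add_left, mink_add_right, mink_smul_left, mink_smul_right, hu.1, huy, hy,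
      mink_comm y u]
    linear_combination cosh_sq_sub_sinh_sq ξ
  have hleft : mink u (cosh ξ • u + sinh ξ • y) = cosh ξ := by
    simp only [mink_add_right, mink_smul_right, hu.1, huy]; ring
  exact ⟨hself, fst_pos_of_mink_pos (by rw [hu.1]; exact zero_le_one) hu.2
    (by rw [hself]; exact zero_le_one) (by rw [hleft]; exact cosh_pos ξ)⟩

lemma integral_id_eq_zero_of_map_minkReflection {μ : Measure V} {u : V}
    (hperp : ∀ᵐ y ∂μ, mink y u = 0) (hinv : μ.map (minkReflection u) = μ) :
    ∫ y, y ∂μ = 0 := by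
  have hneg : ∫ y, y ∂μ = -∫ y, y ∂μ :=
    calc ∫ y, y ∂μ = ∫ y, minkReflection u y ∂μ := by
          conv_lhs => rw [← hinv]
          exact integral_map (minkReflection u).continuous.aemeasurable aestronglyMeasurable_id
      _ = ∫ y, -y ∂μ :=
          integral_congr_ae (hperp.mono fun y hy => minkReflection_of_mink_eq_zero hy)
      _ = -∫ y, y ∂μ := integral_neg _
  rw [eq_neg_iff_add_eq_zero, ← two_smul ℝ] at hneg
  exact (smul_eq_zero.1 hneg).resolve_left two_ne_zero

lemma LH_mink {ν : V → Measure V} {u : V} (hu : mink u u = 1) [IsProbabilityMeasure (ν u)]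
    (hsupp : ∀ᵐ y ∂ν u, mink u y = 0 ∧ mink y y = -1)
    (hinv : (ν u).map (minkReflection u) = ν u) (ξ : ℝ) (v : V) :
    LH ν ξ (fun x => mink x v) u = cosh ξ * mink u v := by
  have hint : Integrable (fun y => y) (ν u) :=
    Integrable.of_bound aestronglyMeasurable_id |u.1|
      (hsupp.mono fun y hy => norm_le_abs_fst_of_mink_eq hu hy.1 hy.2)
  have hbar : ∫ y, y ∂ν u = 0 := integral_id_eq_zero_of_map_minkReflection
    (hsupp.mono fun y hy => (mink_comm y u).trans hy.1) hinv
  have hsmul : Integrable (fun y => sinh ξ • y) (ν u) := hint.smul (sinh ξ)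
  calc LH ν ξ (fun x => mink x v) u = ∫ y, minkCLM v (cosh ξ • u + sinh ξ • y) ∂ν u := by
        simp only [LH, minkCLM_apply]
    _ = minkCLM v (∫ y, cosh ξ • u + sinh ξ • y ∂ν u) :=
        (minkCLM v).integral_comp_comm ((integrable_const _).add hsmul)
    _ = cosh ξ * mink u v := by
        rw [integral_add (integrable_const _) hsmul, integral_const, integral_smul, hbar]
        simp

lemma iterLH_mink {ν : V → Measure V}
    (hνprob : ∀ u ∈ hyperboloid n, IsProbabilityMeasure (ν u))
    (hνsupp : ∀ u ∈ hyperboloid n, ∀ᵐ y ∂ν u, mink u y = 0 ∧ mink y y = -1)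
    (hνinv : ∀ u ∈ hyperboloid n, (ν u).map (minkReflection u) = ν u) (ξs : List ℝ) (v : V)
    {u : V} (hu : u ∈ hyperboloid n) :
    iterLH ν ξs (fun x => mink x v) u = (ξs.map cosh).prod * mink u v := by
  induction ξs generalizing u with
  | nil => simp [iterLH]
  | cons ξ ξs ih =>
    have := hνprob u hu
    calc iterLH ν (ξ :: ξs) (fun x => mink x v) u
        = LH ν ξ (fun x => (ξs.map cosh).prod * mink x v) u :=
          integral_congr_ae <| (hνsupp u hu).mono fun y hy =>
            ih (step_mem_hyperboloid hu hy.1 hy.2 ξ)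
      _ = (ξs.map cosh).prod * LH ν ξ (fun x => mink x v) u := integral_const_mul _ _
      _ = ((ξ :: ξs).map cosh).prod * mink u v := by
          rw [LH_mink hu.1 (hνsupp u hu) (hνinv u hu), List.map_cons, List.prod_cons]
          ring

theorem hyperbolic_chain_expectation_general (n : ℕ)
    (ν : (ℝ × EuclideanSpace ℝ (Fin n)) → Measure (ℝ × EuclideanSpace ℝ (Fin n)))
    (hνprob : ∀ u, mink u u = 1 → 0 < u.1 → IsProbabilityMeasure (ν u))
    (hνsupp : ∀ u, mink u u = 1 → 0 < u.1 →
      ∀ᵐ y ∂(ν u), mink u y = 0 ∧ mink y y = -1)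
    (hνinv : ∀ u, mink u u = 1 → 0 < u.1 →
      ∀ L : (ℝ × EuclideanSpace ℝ (Fin n)) →ₗ[ℝ] (ℝ × EuclideanSpace ℝ (Fin n)),
        (∀ x y, mink (L x) (L y) = mink x y) → L u = u → (ν u).map L = ν u)
    (ξs : List ℝ)
    (u₀ : ℝ × EuclideanSpace ℝ (Fin n)) (hu₀ : mink u₀ u₀ = 1) (hu₀1 : 0 < u₀.1) :
    iterLH ν ξs (fun x => mink x u₀) u₀ = (ξs.map Real.cosh).prod := by
  have hrefl : ∀ u ∈ hyperboloid n, (ν u).map (minkReflection u) = ν u := fun u hu =>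
    hνinv u hu.1 hu.2 (minkReflection u) (mink_minkReflection hu.1) (minkReflection_self hu.1)
  rw [iterLH_mink (fun u hu => hνprob u hu.1 hu.2) (fun u hu => hνsupp u hu.1 hu.2) hrefl ξs u₀
    ⟨hu₀, hu₀1⟩, hu₀, mul_one]

/-- For the Markov chain on the hyperboloid `H^{N-1}` (`N = n + 1 ≥ 3`) starting at `u₀`,
where `u_k` is uniformly distributed on `Σ(u_{k-1}, ξ_k)` for given hyperbolic arcs
`ξ₁, …, ξ_M ≥ 0`, one has `E[⟨u_M, u₀⟩_H] = ∏ cosh ξ_i`. -/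
theorem hyperbolic_chain_expectation (n : ℕ) (hn : 2 ≤ n)
    (ν : (ℝ × EuclideanSpace ℝ (Fin n)) → Measure (ℝ × EuclideanSpace ℝ (Fin n)))
    (hνprob : ∀ u, mink u u = 1 → 0 < u.1 → IsProbabilityMeasure (ν u))
    (hνsupp : ∀ u, mink u u = 1 → 0 < u.1 →
      ∀ᵐ y ∂(ν u), mink u y = 0 ∧ mink y y = -1)
    (hνinv : ∀ u, mink u u = 1 → 0 < u.1 →
      ∀ L : (ℝ × EuclideanSpace ℝ (Fin n)) →ₗ[ℝ] (ℝ × EuclideanSpace ℝ (Fin n)),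
        (∀ x y, mink (L x) (L y) = mink x y) → L u = u → (ν u).map L = ν u)
    (ξs : List ℝ) (hξs : ∀ ξ ∈ ξs, 0 ≤ ξ)
    (u₀ : ℝ × EuclideanSpace ℝ (Fin n)) (hu₀ : mink u₀ u₀ = 1) (hu₀1 : 0 < u₀.1) :
    iterLH ν ξs (fun x => mink x u₀) u₀ = (ξs.map Real.cosh).prod :=
  hyperbolic_chain_expectation_general n ν hνprob hνsupp hνinv ξs u₀ hu₀ hu₀1
end
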